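/- Let α ∈ (1/2, 1) and s > (3−4α)/8 with s < 1/4. Then sup over n ∈ ℤ of the sum over integers k, j with 0 < |j| ≤ |k| and |k| comparable to |n| of (|n|+|k|)^{4−4α}/(⟨n⟩^{2s} ⟨n+k⟩^{2s} ⟨n+j⟩^{2s} ⟨n+k+j⟩^{2s} k² j²) is finite. -/

import Mathlib

open Real

/-- Japanese bracket of an integer. -/
noncomputable def jb (m : ℤ) : ℝ := Real.sqrt (1 + (m : ℝ) ^ 2)

/-!
On the summation region `|n| + |k| ≤ (1 + A) ⟨n⟩` and `k⁻² ≤ 2A² ⟨n⟩⁻²`, and Peetre's inequality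
`⟨m + j⟩^(-2s) ≤ 2^|2s| ⟨m⟩^(-2s) ⟨j⟩^|2s|` removes the shift `j` from `⟨n + j⟩` and `⟨n + k + j⟩`.
This bounds the summand by `⟨n⟩^(2-4α-4s) · ⟨n+k⟩^(-4s) · ⟨j⟩^(4|s|) j⁻²`, a product of a function
of `k` and a function of `j`. The `j`-series converges because `4|s| < 1`. The `k`-sum over
`|k| ≤ A|n|` is `O(⟨n⟩^(1-4s))` because `4s < 1`: for `s ≥ 0`, Bernoulli's inequality dominates
each term `m^(-4s)` by `(m^(1-4s) - (m-1)^(1-4s)) / (1-4s)`, which telescopes. Altogether the sum is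
`O(⟨n⟩^(3-4α-8s)) = O(1)`.
-/

open Finset

lemma jb_sq (m : ℤ) : jb m ^ 2 = 1 + (m : ℝ) ^ 2 := Real.sq_sqrt (by positivity)

lemma jb_nonneg (m : ℤ) : 0 ≤ jb m := Real.sqrt_nonneg _

lemma one_le_jb (m : ℤ) : 1 ≤ jb m := Real.one_le_sqrt.mpr (by nlinarith)

lemma jb_pos (m : ℤ) : 0 < jb m := one_pos.trans_le (one_le_jb m)

lemma abs_le_jb (m : ℤ) : |(m : ℝ)| ≤ jb m :=
  Real.abs_le_sqrt (by linarith)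

lemma jb_le_one_add_abs (m : ℤ) : jb m ≤ 1 + |(m : ℝ)| :=
  Real.sqrt_le_iff.mpr ⟨by positivity, by nlinarith [abs_nonneg (m : ℝ), sq_abs (m : ℝ)]⟩

lemma jb_neg (m : ℤ) : jb (-m) = jb m := by simp [jb]

lemma jb_add_le (m j : ℤ) : jb (m + j) ≤ 2 * jb m * jb j :=
  Real.sqrt_le_iff.mpr ⟨by positivity [jb_nonneg m, jb_nonneg j], by
    rw [mul_pow, mul_pow, jb_sq, jb_sq]; push_cast
    nlinarith [sq_nonneg ((m : ℝ) - j), sq_nonneg ((m : ℝ) * j)]⟩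

lemma jb_add_rpow_le (t : ℝ) (m j : ℤ) : jb (m + j) ^ t ≤ 2 ^ |t| * jb m ^ t * jb j ^ |t| := by
  rcases le_or_gt 0 t with ht | ht
  · rw [abs_of_nonneg ht, ← Real.mul_rpow (by norm_num) (jb_nonneg m),
      ← Real.mul_rpow (by positivity [jb_nonneg m]) (jb_nonneg j)]
    exact Real.rpow_le_rpow (jb_nonneg _) (jb_add_le m j) ht
  · have h : jb m / (2 * jb j) ≤ jb (m + j) := by
      rw [div_le_iff₀ (by positivity [jb_pos j])]
      simpa [jb_neg, mul_comm, mul_left_comm] using jb_add_le (m + j) (-j)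
    calc jb (m + j) ^ t ≤ (jb m / (2 * jb j)) ^ t :=
          Real.rpow_le_rpow_of_nonpos (by positivity [jb_pos m, jb_pos j]) h ht.le
      _ = 2 ^ |t| * jb m ^ t * jb j ^ |t| := by
          rw [abs_of_neg ht, Real.div_rpow (jb_nonneg m) (by positivity [jb_nonneg j]),
            Real.mul_rpow (by norm_num) (jb_nonneg j), Real.rpow_neg (by norm_num),
            Real.rpow_neg (jb_nonneg j)]
          field_simp

lemma sub_one_rpow_le {p y : ℝ} (hp0 : 0 ≤ p) (hp1 : p ≤ 1) (hy : 1 ≤ y) :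
    (y - 1) ^ p ≤ y ^ p - p * y ^ (p - 1) := by
  have hy0 : 0 < y := one_pos.trans_le hy
  have hb := rpow_one_add_le_one_add_mul_self (s := -y⁻¹)
    (by linarith [inv_le_one_of_one_le₀ hy]) hp0 hp1
  calc (y - 1) ^ p = y ^ p * (1 + -y⁻¹) ^ p := by
        rw [← Real.mul_rpow hy0.le (by linarith [inv_le_one_of_one_le₀ hy])]
        field_simp
        ring_nf
    _ ≤ y ^ p * (1 + p * -y⁻¹) := by gcongr
    _ = y ^ p - p * y ^ (p - 1) := by
        rw [Real.rpow_sub_one hy0.ne']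
        ring

lemma Icc_neg_succ_eq_insert (L : ℕ) :
    Icc (-((L + 1 : ℕ) : ℤ)) (L + 1 : ℕ) =
      insert (-((L : ℤ) + 1)) (insert ((L : ℤ) + 1) (Icc (-(L : ℤ)) L)) := by
  ext; simp; omega

lemma sum_Icc_jb_rpow_le_of_nonpos {t : ℝ} (ht : -1 < t) (ht0 : t ≤ 0) (L : ℕ) :
    ∑ m ∈ Icc (-(L : ℤ)) L, jb m ^ t ≤ 1 + 2 / (1 + t) * (L : ℝ) ^ (1 + t) := by
  induction L with
  | zero => simp [jb, Real.zero_rpow (by linarith : 1 + t ≠ 0)]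
  | succ L ih =>
    rw [Icc_neg_succ_eq_insert, sum_insert (by simp; omega), sum_insert (by simp), jb_neg]
    have hL : (L : ℝ) + 1 ≤ jb (L + 1) := by
      simpa [abs_of_nonneg (by positivity : (0 : ℝ) ≤ L + 1)] using abs_le_jb (L + 1)
    have hstep : (1 + t) * ((L : ℝ) + 1) ^ t ≤ ((L : ℝ) + 1) ^ (1 + t) - (L : ℝ) ^ (1 + t) := by
      have := sub_one_rpow_le (p := 1 + t) (y := L + 1) (by linarith) (by linarith) (by simp)
      simp only [add_sub_cancel_right, add_sub_cancel_left] at this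
      linarith
    have hjb : jb (L + 1) ^ t ≤ ((L : ℝ) + 1) ^ t :=
      Real.rpow_le_rpow_of_nonpos (by positivity) hL ht0
    have h1t : 0 < 1 + t := by linarith
    have hgain :
        2 * ((L : ℝ) + 1) ^ t ≤ 2 / (1 + t) * (((L : ℝ) + 1) ^ (1 + t) - (L : ℝ) ^ (1 + t)) := by
      rw [div_mul_eq_mul_div, le_div_iff₀ h1t]
      linarith
    push_cast
    linarith

lemma sum_Icc_jb_rpow_le_of_nonneg {t : ℝ} (ht0 : 0 ≤ t) (L : ℕ) :
    ∑ m ∈ Icc (-(L : ℤ)) L, jb m ^ t ≤ (2 * L + 1) * ((L : ℝ) + 1) ^ t := by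
  have hterm : ∀ m ∈ Icc (-(L : ℤ)) L, jb m ^ t ≤ ((L : ℝ) + 1) ^ t := by
    intro m hm
    have hmL : |(m : ℝ)| ≤ L := by
      rw [← Int.cast_abs]; exact_mod_cast abs_le.mpr (mem_Icc.mp hm)
    exact Real.rpow_le_rpow (jb_nonneg m) ((jb_le_one_add_abs m).trans (by linarith)) ht0
  calc ∑ m ∈ Icc (-(L : ℤ)) L, jb m ^ t ≤ #(Icc (-(L : ℤ)) L) • ((L : ℝ) + 1) ^ t :=
        sum_le_card_nsmul _ _ _ hterm
    _ = (2 * L + 1) * ((L : ℝ) + 1) ^ t := by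
        rw [Int.card_Icc, nsmul_eq_mul]
        congr 1
        norm_cast
        omega

lemma exists_sum_Icc_jb_rpow_le {t : ℝ} (ht : -1 < t) :
    ∃ C, 0 ≤ C ∧ ∀ L : ℕ, ∑ m ∈ Icc (-(L : ℤ)) L, jb m ^ t ≤ C * ((L : ℝ) + 1) ^ (1 + t) := by
  rcases le_or_gt t 0 with ht0 | ht0
  · have h3 : 0 ≤ 2 / (1 + t) := div_nonneg zero_le_two (by linarith)
    refine ⟨1 + 2 / (1 + t), by linarith, fun L => (sum_Icc_jb_rpow_le_of_nonpos ht ht0 L).trans ?_⟩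
    have h1 : 1 ≤ ((L : ℝ) + 1) ^ (1 + t) := Real.one_le_rpow (by linarith) (by linarith)
    have h2 : (L : ℝ) ^ (1 + t) ≤ ((L : ℝ) + 1) ^ (1 + t) :=
      Real.rpow_le_rpow (by positivity) (by linarith) (by linarith)
    nlinarith
  · refine ⟨2, zero_le_two, fun L => (sum_Icc_jb_rpow_le_of_nonneg ht0.le L).trans ?_⟩
    rw [Real.rpow_add (by positivity), Real.rpow_one, ← mul_assoc]
    gcongr
    linarith

lemma exists_sum_Icc_jb_add_rpow_le {t : ℝ} (ht : -1 < t) :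
    ∃ C, 0 ≤ C ∧ ∀ (n : ℤ) (K : ℕ),
      ∑ k ∈ Icc (-(K : ℤ)) K, jb (n + k) ^ t ≤ C * (|(n : ℝ)| + K + 1) ^ (1 + t) := by
  obtain ⟨C, hC0, hC⟩ := exists_sum_Icc_jb_rpow_le ht
  refine ⟨C, hC0, fun n K => ?_⟩
  have hsub : Icc (n + -K) (n + K) ⊆ Icc (-((n.natAbs + K : ℕ) : ℤ)) (n.natAbs + K : ℕ) := by
    intro m hm; simp only [mem_Icc] at hm ⊢; omega
  calc ∑ k ∈ Icc (-(K : ℤ)) K, jb (n + k) ^ t = ∑ m ∈ Icc (n + -K) (n + K), jb m ^ t := by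
        rw [← map_add_left_Icc, sum_map]; rfl
    _ ≤ ∑ m ∈ Icc (-((n.natAbs + K : ℕ) : ℤ)) (n.natAbs + K : ℕ), jb m ^ t :=
        sum_le_sum_of_subset_of_nonneg hsub fun m _ _ => Real.rpow_nonneg (jb_nonneg m) t
    _ ≤ C * (|(n : ℝ)| + K + 1) ^ (1 + t) := by
        simpa [Nat.cast_natAbs] using hC (n.natAbs + K)

lemma mem_Icc_natFloor_iff {x : ℝ} (hx : 0 ≤ x) (k : ℤ) :
    k ∈ Icc (-(⌊x⌋₊ : ℤ)) ⌊x⌋₊ ↔ |(k : ℝ)| ≤ x := by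
  rw [mem_Icc, ← abs_le, Int.abs_eq_natAbs, Nat.cast_le, Nat.le_floor_iff hx, Nat.cast_natAbs,
    Int.cast_abs]

noncomputable def jbShiftRpow (t A : ℝ) (n k : ℤ) : ℝ :=
  if |(k : ℝ)| ≤ A * |(n : ℝ)| then jb (n + k) ^ t else 0

lemma jbShiftRpow_eq_indicator (t : ℝ) {A : ℝ} (hA : 0 ≤ A) (n : ℤ) :
    jbShiftRpow t A n =
      (Icc (-(⌊A * |(n : ℝ)|⌋₊ : ℤ)) ⌊A * |(n : ℝ)|⌋₊ : Set ℤ).indicator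
        fun k => jb (n + k) ^ t := by
  ext k
  have hx : 0 ≤ A * |(n : ℝ)| := by positivity
  simp only [jbShiftRpow, Set.indicator, mem_coe, mem_Icc_natFloor_iff hx]

lemma summable_jbShiftRpow (t : ℝ) {A : ℝ} (hA : 0 ≤ A) (n : ℤ) :
    Summable (jbShiftRpow t A n) := by
  rw [jbShiftRpow_eq_indicator t hA n]
  exact summable_of_ne_finset_zero fun k hk => Set.indicator_of_notMem hk _

lemma exists_tsum_jbShiftRpow_le {t A : ℝ} (ht : -1 < t) (hA : 0 ≤ A) :
    ∃ C, 0 ≤ C ∧ ∀ n : ℤ, ∑' k, jbShiftRpow t A n k ≤ C * jb n ^ (1 + t) := by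
  obtain ⟨C, hC0, hC⟩ := exists_sum_Icc_jb_add_rpow_le ht
  refine ⟨C * (2 + A) ^ (1 + t), by positivity, fun n => ?_⟩
  have hx : 0 ≤ A * |(n : ℝ)| := by positivity
  have hK : |(n : ℝ)| + ⌊A * |(n : ℝ)|⌋₊ + 1 ≤ (2 + A) * jb n := by
    nlinarith [Nat.floor_le hx, abs_le_jb n, one_le_jb n]
  calc ∑' k, jbShiftRpow t A n k
      = ∑ k ∈ Icc (-(⌊A * |(n : ℝ)|⌋₊ : ℤ)) ⌊A * |(n : ℝ)|⌋₊, jb (n + k) ^ t := by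
        rw [jbShiftRpow_eq_indicator t hA n, sum_eq_tsum_indicator]
    _ ≤ C * ((2 + A) * jb n) ^ (1 + t) := by
        refine (hC n _).trans ?_
        gcongr
        linarith
    _ = C * (2 + A) ^ (1 + t) * jb n ^ (1 + t) := by
        rw [Real.mul_rpow (by linarith) (jb_nonneg n), mul_assoc]

lemma summable_jb_rpow_div_sq {r : ℝ} (hr0 : 0 ≤ r) (hr1 : r < 1) :
    Summable fun j : ℤ => jb j ^ r / (j : ℝ) ^ 2 := by
  refine Summable.of_nonneg_of_le (fun j => by positivity [jb_nonneg j]) (fun j => ?_)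
    ((summable_abs_int_rpow (b := 2 - r) (by linarith)).mul_left (2 ^ r))
  rcases eq_or_ne j 0 with rfl | hj
  · simp only [Int.cast_zero, ne_eq, OfNat.ofNat_ne_zero, not_false_eq_true, zero_pow, div_zero]
    positivity
  have hj1 : 1 ≤ |(j : ℝ)| := by
    rw [← Int.cast_abs]; exact_mod_cast Int.one_le_abs hj
  have hjb : jb j ≤ 2 * |(j : ℝ)| := (jb_le_one_add_abs j).trans (by linarith)
  calc jb j ^ r / (j : ℝ) ^ 2 ≤ (2 * |(j : ℝ)|) ^ r / (j : ℝ) ^ 2 := by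
        gcongr
        exact jb_nonneg j
    _ = 2 ^ r * |(j : ℝ)| ^ (-(2 - r)) := by
        rw [Real.mul_rpow zero_le_two (abs_nonneg _), neg_sub, Real.rpow_sub (by linarith),
          Real.rpow_two, sq_abs]
        ring

lemma inv_sq_le_mul_jb_rpow {A : ℝ} (hA : 1 ≤ A) {n k : ℤ} (hk : k ≠ 0)
    (hnk : |(n : ℝ)| ≤ A * |(k : ℝ)|) : ((k : ℝ) ^ 2)⁻¹ ≤ 2 * A ^ 2 * jb n ^ (-2 : ℝ) := by
  have hk1 : 1 ≤ (k : ℝ) ^ 2 := by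
    rw [← sq_abs, ← Int.cast_abs]; exact_mod_cast one_le_pow₀ (Int.one_le_abs hk)
  have hsq : (n : ℝ) ^ 2 ≤ A ^ 2 * (k : ℝ) ^ 2 := by
    rw [← sq_abs, ← sq_abs (k : ℝ), ← mul_pow]
    exact pow_le_pow_left₀ (abs_nonneg _) hnk 2
  rw [Real.rpow_neg (jb_nonneg n), Real.rpow_two, jb_sq, ← div_eq_mul_inv, inv_eq_one_div,
    div_le_div_iff₀ (by positivity) (by positivity)]
  nlinarith

lemma rpow_div_jb_prod_le {a t A : ℝ} (ha : 0 ≤ a) (hA : 1 ≤ A) {n k : ℤ} (j : ℤ) (hk : k ≠ 0)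
    (hnk : |(n : ℝ)| ≤ A * |(k : ℝ)|) (hkn : |(k : ℝ)| ≤ A * |(n : ℝ)|) :
    (|(n : ℝ)| + |(k : ℝ)|) ^ a /
        (jb n ^ t * jb (n + k) ^ t * jb (n + j) ^ t * jb (n + k + j) ^ t *
          (k : ℝ) ^ 2 * (j : ℝ) ^ 2)
      ≤ 2 * A ^ 2 * (1 + A) ^ a * 4 ^ |t| * jb n ^ (a - 2 * t - 2) * jb (n + k) ^ (-(2 * t)) *
          (jb j ^ (2 * |t|) / (j : ℝ) ^ 2) := by
  have hnum : (|(n : ℝ)| + |(k : ℝ)|) ^ a ≤ ((1 + A) * jb n) ^ a := by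
    gcongr
    nlinarith [abs_le_jb n]
  have hnj : jb (n + j) ^ (-t) ≤ 2 ^ |t| * jb n ^ (-t) * jb j ^ |t| := by
    simpa using jb_add_rpow_le (-t) n j
  have hnkj : jb (n + k + j) ^ (-t) ≤ 2 ^ |t| * jb (n + k) ^ (-t) * jb j ^ |t| := by
    simpa using jb_add_rpow_le (-t) (n + k) j
  have hk2 := inv_sq_le_mul_jb_rpow hA hk hnk
  calc _ = (|(n : ℝ)| + |(k : ℝ)|) ^ a * jb n ^ (-t) * jb (n + k) ^ (-t) * jb (n + j) ^ (-t) *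
          jb (n + k + j) ^ (-t) * ((k : ℝ) ^ 2)⁻¹ * ((j : ℝ) ^ 2)⁻¹ := by
        simp only [Real.rpow_neg (jb_nonneg _)]
        field_simp
    _ ≤ ((1 + A) * jb n) ^ a * jb n ^ (-t) * jb (n + k) ^ (-t) *
          (2 ^ |t| * jb n ^ (-t) * jb j ^ |t|) * (2 ^ |t| * jb (n + k) ^ (-t) * jb j ^ |t|) *
          (2 * A ^ 2 * jb n ^ (-2 : ℝ)) * ((j : ℝ) ^ 2)⁻¹ := by
        gcongr <;> (unfold jb; positivity)
    _ = _ := by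
        have hn :
            jb n ^ (a - 2 * t - 2) = jb n ^ a * jb n ^ (-t) * jb n ^ (-t) * jb n ^ (-2 : ℝ) := by
          simp only [← Real.rpow_add (jb_pos n)]; ring_nf
        have hnk' : jb (n + k) ^ (-(2 * t)) = jb (n + k) ^ (-t) * jb (n + k) ^ (-t) := by
          rw [← Real.rpow_add (jb_pos _)]; ring_nf
        have hj : jb j ^ (2 * |t|) = jb j ^ |t| * jb j ^ |t| := by
          rw [← Real.rpow_add (jb_pos _)]; ring_nf
        have h4 : (4 : ℝ) ^ |t| = 2 ^ |t| * 2 ^ |t| := by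
          rw [← Real.mul_rpow zero_le_two zero_le_two]; norm_num
        rw [hn, hnk', hj, h4, Real.mul_rpow (by linarith) (jb_nonneg n)]
        ring

lemma tsum_le_tsum_mul_tsum_of_le_mul {ι κ : Type*} {f : ι × κ → ℝ} {u : ι → ℝ} {v : κ → ℝ}
    (hf : ∀ p, 0 ≤ f p) (hfuv : ∀ p, f p ≤ u p.1 * v p.2) (hu0 : ∀ i, 0 ≤ u i)
    (hv0 : ∀ k, 0 ≤ v k) (hu : Summable u) (hv : Summable v) :
    ∑' p, f p ≤ (∑' i, u i) * ∑' k, v k := by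
  have huv := hu.mul_of_nonneg hv hu0 hv0
  rw [hu.tsum_mul_tsum hv huv]
  exact (huv.of_nonneg_of_le hf hfuv).tsum_le_tsum hfuv huv

noncomputable def summand (α s A : ℝ) (n : ℤ) (p : ℤ × ℤ) : ℝ :=
  if 0 < |p.2| ∧ |p.2| ≤ |p.1| ∧ (|n| : ℝ) ≤ A * (|p.1| : ℝ) ∧ (|p.1| : ℝ) ≤ A * (|n| : ℝ) then
    ((|n| : ℝ) + (|p.1| : ℝ)) ^ (4 - 4 * α) /
      (jb n ^ (2 * s) * jb (n + p.1) ^ (2 * s) * jb (n + p.2) ^ (2 * s)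
        * jb (n + p.1 + p.2) ^ (2 * s) * (p.1 : ℝ) ^ 2 * (p.2 : ℝ) ^ 2)
  else 0

lemma summand_nonneg (α s A : ℝ) (n : ℤ) (p : ℤ × ℤ) : 0 ≤ summand α s A n p := by
  unfold summand
  split_ifs
  · unfold jb; positivity
  · rfl

lemma summand_le {α A : ℝ} (s : ℝ) (hα1 : α < 1) (hA : 1 ≤ A) (n : ℤ) (p : ℤ × ℤ) :
    summand α s A n p ≤
      2 * A ^ 2 * (1 + A) ^ (4 - 4 * α) * 4 ^ |2 * s| * jb n ^ (4 - 4 * α - 2 * (2 * s) - 2) *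
        jbShiftRpow (-(2 * (2 * s))) A n p.1 * (jb p.2 ^ (2 * |2 * s|) / (p.2 : ℝ) ^ 2) := by
  obtain ⟨k, j⟩ := p
  dsimp only [summand]
  split_ifs with hkj
  · obtain ⟨hj, hjk, hnk, hkn⟩ := hkj
    have hk : k ≠ 0 := by rintro rfl; simp only [abs_zero] at hjk; omega
    rw [jbShiftRpow, if_pos hkn]
    exact rpow_div_jb_prod_le (by linarith) hA j hk hnk hkn
  · unfold jbShiftRpow jb; positivity

/-- Here `p.1 = k` and `p.2 = j`; `|k| ≈ |n|` means `A⁻¹|n| ≤ |k| ≤ A|n|`. -/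
theorem stmt_8_general (α s : ℝ) (hα1 : α < 1)
    (hs : (3 - 4 * α) / 8 < s) (hs4 : s < 1 / 4) :
    ∀ A : ℝ, 1 < A → ∃ C : ℝ, ∀ n : ℤ,
      (∑' p : ℤ × ℤ,
        if 0 < |p.2| ∧ |p.2| ≤ |p.1| ∧ (|n| : ℝ) ≤ A * (|p.1| : ℝ) ∧ (|p.1| : ℝ) ≤ A * (|n| : ℝ) then
          ((|n| : ℝ) + (|p.1| : ℝ)) ^ (4 - 4 * α) /
            (jb n ^ (2 * s) * jb (n + p.1) ^ (2 * s) * jb (n + p.2) ^ (2 * s)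
              * jb (n + p.1 + p.2) ^ (2 * s) * (p.1 : ℝ) ^ 2 * (p.2 : ℝ) ^ 2)
        else 0) ≤ C := by
  intro A hA
  obtain ⟨Ck, hCk0, hCk⟩ :=
    exists_tsum_jbShiftRpow_le (t := -(2 * (2 * s))) (A := A) (by linarith) (by linarith)
  set v : ℤ → ℝ := fun j => jb j ^ (2 * |2 * s|) / (j : ℝ) ^ 2
  have hv : Summable v :=
    summable_jb_rpow_div_sq (by positivity) (by cases abs_cases (2 * s) <;> linarith)
  have hv0 : ∀ j, 0 ≤ v j := fun j => by unfold v jb; positivity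
  have hV : 0 ≤ ∑' j, v j := tsum_nonneg hv0
  set c := 2 * A ^ 2 * (1 + A) ^ (4 - 4 * α) * 4 ^ |2 * s|
  set e := 4 - 4 * α - 2 * (2 * s) - 2
  refine ⟨c * Ck * ∑' j, v j, fun n => ?_⟩
  calc ∑' p, summand α s A n p
      ≤ (∑' k, c * jb n ^ e * jbShiftRpow (-(2 * (2 * s))) A n k) * ∑' j, v j :=
        tsum_le_tsum_mul_tsum_of_le_mul (summand_nonneg α s A n) (summand_le s hα1 hA.le n)
          (fun k => by unfold jbShiftRpow jb; positivity) hv0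
          ((summable_jbShiftRpow _ (by linarith) n).mul_left _) hv
    _ ≤ c * jb n ^ e * (Ck * jb n ^ (1 + -(2 * (2 * s)))) * ∑' j, v j := by
        rw [tsum_mul_left]
        gcongr
        · exact mul_nonneg (by positivity) (Real.rpow_nonneg (jb_nonneg n) e)
        exact hCk n
    _ = c * Ck * (∑' j, v j) * jb n ^ (3 - 4 * α - 8 * s) := by
        rw [show 3 - 4 * α - 8 * s = e + (1 + -(2 * (2 * s))) by ring, Real.rpow_add (jb_pos n) e]
        ring
    _ ≤ c * Ck * ∑' j, v j :=
        mul_le_of_le_one_right (by positivity)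
          (Real.rpow_le_one_of_one_le_of_nonpos (one_le_jb n) (by linarith))

/-- uniform-in-`n` bound in the region `|k| ≈ |n|`.
Here `p.1 = k` and `p.2 = j`; `|k| ≈ |n|` means `A⁻¹|n| ≤ |k| ≤ A|n|`. -/
theorem stmt_8 (α s : ℝ) (hα : 1 / 2 < α) (hα1 : α < 1)
    (hs : (3 - 4 * α) / 8 < s) (hs4 : s < 1 / 4) :
    ∀ A : ℝ, 1 < A → ∃ C : ℝ, ∀ n : ℤ,
      (∑' p : ℤ × ℤ,
        if 0 < |p.2| ∧ |p.2| ≤ |p.1| ∧ (|n| : ℝ) ≤ A * (|p.1| : ℝ) ∧ (|p.1| : ℝ) ≤ A * (|n| : ℝ) then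
          ((|n| : ℝ) + (|p.1| : ℝ)) ^ (4 - 4 * α) /
            (jb n ^ (2 * s) * jb (n + p.1) ^ (2 * s) * jb (n + p.2) ^ (2 * s)
              * jb (n + p.1 + p.2) ^ (2 * s) * (p.1 : ℝ) ^ 2 * (p.2 : ℝ) ^ 2)
        else 0) ≤ C :=
  stmt_8_general α s hα1 hs hs4
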